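/- arXiv:0806.4675 — 2 statements merged into one kernel-verified Lean document; each statement's English description precedes it below -/
import Mathlib

section
/- (Theorem 1(b), ratio form) Let Y be a square-integrable real random variable with Var(Y) > 0, let X(1), …, X(n) be pairwise independent square-integrable real random variables with Var(X(i)) > 0 for each i, and let W = Y + Σᵢ βᵢ*(X(i) − E[X(i)]) with βᵢ* = −Cov(Y, X(i))/Var(X(i)). Then Var(W)/Var(Y) = 1 − Σᵢ corr(Y, X(i))², where corr(A,B) = Cov(A,B)/(√Var(A) · √Var(B)). -/
open MeasureTheory ProbabilityTheory

/-- Covariance of two real random variables: `Cov(X,Y) = E[(X - E[X]) * (Y - E[Y])]`. -/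
noncomputable def cov {Ω : Type*} [MeasurableSpace Ω] (μ : Measure Ω) (X Y : Ω → ℝ) : ℝ :=
  ∫ ω, (X ω - ∫ ω', X ω' ∂μ) * (Y ω - ∫ ω', Y ω' ∂μ) ∂μ

/-- Variance of a real random variable: `Var(X) = Cov(X,X)`. -/
noncomputable def var {Ω : Type*} [MeasurableSpace Ω] (μ : Measure Ω) (X : Ω → ℝ) : ℝ :=
  cov μ X X

/-- Correlation coefficient: `corr(X,Y) = Cov(X,Y) / (√Var(X) * √Var(Y))`. -/
noncomputable def corr {Ω : Type*} [MeasurableSpace Ω] (μ : Measure Ω) (X Y : Ω → ℝ) : ℝ :=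
  cov μ X Y / (Real.sqrt (var μ X) * Real.sqrt (var μ Y))


lemma integrable_mul2 {Ω : Type*} [MeasurableSpace Ω] {μ : Measure Ω} {f g : Ω → ℝ}
    (hf : MemLp f 2 μ) (hg : MemLp g 2 μ) : Integrable (fun ω => f ω * g ω) μ := by
  have h := L2.integrable_inner (𝕜 := ℝ) (hf.toLp f) (hg.toLp g)
  refine h.congr ?_
  filter_upwards [hf.coeFn_toLp, hg.coeFn_toLp] with ω h1 h2
  simp [h1, h2, RCLike.inner_apply, mul_comm]

/-- Theorem 1(b), ratio form: with `βᵢ* = -Cov(Y,Xᵢ)/Var(Xᵢ)`,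
`Var(W)/Var(Y) = 1 - Σᵢ corr(Y,Xᵢ)²`. -/
theorem variance_ratio_optimal_linear_control_variate {Ω : Type*} [MeasurableSpace Ω]
    (μ : Measure Ω) [IsProbabilityMeasure μ] {n : ℕ} (Y : Ω → ℝ) (X : Fin n → Ω → ℝ)
    (hY : MemLp Y 2 μ) (hX : ∀ i, MemLp (X i) 2 μ)
    (hindep : Pairwise fun i j => IndepFun (X i) (X j) μ)
    (hYpos : 0 < var μ Y) (hXpos : ∀ i, 0 < var μ (X i)) :
    var μ (fun ω => Y ω + ∑ i, (-(cov μ Y (X i) / var μ (X i))) * (X i ω - ∫ ω', X i ω' ∂μ)) /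
        var μ Y = 1 - ∑ i, corr μ Y (X i) ^ 2 := by
  classical
  set β : Fin n → ℝ := fun i => -(cov μ Y (X i) / var μ (X i)) with hβ
  set cY : ℝ := ∫ ω', Y ω' ∂μ with hcY
  set c : Fin n → ℝ := fun i => ∫ ω', X i ω' ∂μ with hc
  set Yc : Ω → ℝ := fun ω => Y ω - cY with hYc
  set Xc : Fin n → Ω → ℝ := fun i ω => X i ω - c i with hXc
  have hYcL2 : MemLp Yc 2 μ := hY.sub (memLp_const cY)
  have hXcL2 : ∀ i, MemLp (Xc i) 2 μ := fun i => (hX i).sub (memLp_const (c i))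
  have hYint : Integrable Y μ := hY.integrable one_le_two
  have hXint : ∀ i, Integrable (X i) μ := fun i => (hX i).integrable one_le_two
  have hYc0 : ∫ ω, Yc ω ∂μ = 0 := by
    simp [hYc, integral_sub hYint (integrable_const _), hcY]
  have hXc0 : ∀ i, ∫ ω, Xc i ω ∂μ = 0 := fun i => by
    simp [hXc, integral_sub (hXint i) (integrable_const _), hc]
  -- cov of Y and X i in terms of centered functions
  have hcovYX : ∀ i, cov μ Y (X i) = ∫ ω, Yc ω * Xc i ω ∂μ := fun i => rfl
  have hvarX : ∀ i, var μ (X i) = ∫ ω, Xc i ω * Xc i ω ∂μ := fun i => rfl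
  have hvarY : var μ Y = ∫ ω, Yc ω * Yc ω ∂μ := rfl
  -- integrability of products
  have hIYX : ∀ i, Integrable (fun ω => Yc ω * Xc i ω) μ :=
    fun i => integrable_mul2 hYcL2 (hXcL2 i)
  have hIXX : ∀ i j, Integrable (fun ω => Xc i ω * Xc j ω) μ :=
    fun i j => integrable_mul2 (hXcL2 i) (hXcL2 j)
  -- cross covariances vanish
  have hcross : ∀ i j, i ≠ j → ∫ ω, Xc i ω * Xc j ω ∂μ = 0 := by
    intro i j hij
    have hind : IndepFun (Xc i) (Xc j) μ := by
      have := (hindep hij).comp (φ := fun x => x - c i) (ψ := fun x => x - c j)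
        (measurable_id.sub_const _) (measurable_id.sub_const _)
      exact this
    have := hind.integral_mul_eq_mul_integral ((hXcL2 i).aestronglyMeasurable) ((hXcL2 j).aestronglyMeasurable)
    simpa [hXc0 i, hXc0 j] using this
  -- the combination S
  set S : Ω → ℝ := fun ω => ∑ i, β i * Xc i ω with hS
  have hSL2 : MemLp S 2 μ := by
    have heq : S = ∑ i, fun ω => β i * Xc i ω := by funext ω; simp [hS]
    rw [heq]
    exact memLp_finset_sum' _ (fun i _ => ((hXcL2 i).const_mul (β i)))
  have hSint : Integrable S μ := hSL2.integrable one_le_two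
  have hS0 : ∫ ω, S ω ∂μ = 0 := by
    rw [hS, integral_finset_sum _ (fun i _ => ((hXcL2 i).integrable one_le_two).const_mul (β i))]
    simp [integral_const_mul, hXc0]
  -- W rewritten
  have hW : (fun ω => Y ω + ∑ i, (-(cov μ Y (X i) / var μ (X i))) * (X i ω - ∫ ω', X i ω' ∂μ))
      = fun ω => (Yc ω + S ω) + cY := by
    funext ω; simp [hYc, hS, hβ, hXc, hc]; ring
  -- var is shift invariant for W
  have hsum_int : Integrable (fun ω => Yc ω + S ω) μ :=
    (hYcL2.integrable one_le_two).add hSint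
  have hmeanW : ∫ ω, ((Yc ω + S ω) + cY) ∂μ = cY := by
    rw [integral_add hsum_int (integrable_const _), integral_add (hYcL2.integrable one_le_two) hSint]
    simp [hYc0, hS0]
  have hvarW : var μ (fun ω => (Yc ω + S ω) + cY) = ∫ ω, (Yc ω + S ω) * (Yc ω + S ω) ∂μ := by
    unfold var cov
    rw [hmeanW]
    simp
  -- expand the square
  have hIYS : Integrable (fun ω => Yc ω * S ω) μ := integrable_mul2 hYcL2 hSL2
  have hISS : Integrable (fun ω => S ω * S ω) μ := integrable_mul2 hSL2 hSL2
  have hexp : ∫ ω, (Yc ω + S ω) * (Yc ω + S ω) ∂μ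
      = ∫ ω, Yc ω * Yc ω ∂μ + 2 * ∫ ω, Yc ω * S ω ∂μ + ∫ ω, S ω * S ω ∂μ := by
    have : (fun ω => (Yc ω + S ω) * (Yc ω + S ω))
        = fun ω => Yc ω * Yc ω + 2 * (Yc ω * S ω) + S ω * S ω := by
      funext ω; ring
    have h1 : Integrable (fun ω => Yc ω * Yc ω + 2 * (Yc ω * S ω)) μ :=
      (integrable_mul2 hYcL2 hYcL2).add (hIYS.const_mul 2)
    rw [this, integral_add h1 hISS,
      integral_add (integrable_mul2 hYcL2 hYcL2) (hIYS.const_mul 2), integral_const_mul]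
  -- ∫ Yc S
  have hYS : ∫ ω, Yc ω * S ω ∂μ = ∑ i, β i * cov μ Y (X i) := by
    have : (fun ω => Yc ω * S ω) = fun ω => ∑ i, β i * (Yc ω * Xc i ω) := by
      funext ω; simp only [hS, Finset.mul_sum]
      exact Finset.sum_congr rfl fun i _ => by ring
    rw [this, integral_finset_sum _ (fun i _ => (hIYX i).const_mul (β i))]
    simp [integral_const_mul, hcovYX]
  -- ∫ S S
  have hSS : ∫ ω, S ω * S ω ∂μ = ∑ i, β i ^ 2 * var μ (X i) := by
    have : (fun ω => S ω * S ω)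
        = fun ω => ∑ i, ∑ j, (β i * β j) * (Xc i ω * Xc j ω) := by
      funext ω; simp only [hS, Finset.sum_mul, Finset.mul_sum]
      exact Finset.sum_congr rfl fun i _ => Finset.sum_congr rfl fun j _ => by ring
    rw [this, integral_finset_sum _ (fun i _ =>
      integrable_finset_sum _ (fun j _ => (hIXX i j).const_mul _))]
    have : ∀ i, ∫ ω, (∑ j, (β i * β j) * (Xc i ω * Xc j ω)) ∂μ = β i ^ 2 * var μ (X i) := by
      intro i
      rw [integral_finset_sum _ (fun j _ => (hIXX i j).const_mul _)]
      rw [Finset.sum_eq_single i]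
      · rw [integral_const_mul, ← hvarX]; ring
      · intro j _ hij
        rw [integral_const_mul, hcross i j (Ne.symm hij), mul_zero]
      · simp
    simp [this]
  -- put together
  rw [hW, hvarW, hexp, hYS, hSS, ← hvarY]
  have hβval : ∀ i, β i * cov μ Y (X i) = -(cov μ Y (X i) ^ 2 / var μ (X i)) := by
    intro i; rw [hβ]; field_simp
  have hβ2 : ∀ i, β i ^ 2 * var μ (X i) = cov μ Y (X i) ^ 2 / var μ (X i) := by
    intro i
    have hv : var μ (X i) ≠ 0 := (hXpos i).ne'
    rw [hβ]; field_simp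
  simp only [hβval, hβ2]
  have hcorr : ∀ i, corr μ Y (X i) ^ 2 = cov μ Y (X i) ^ 2 / var μ (X i) / var μ Y := by
    intro i
    rw [corr, div_pow, mul_pow, Real.sq_sqrt hYpos.le, Real.sq_sqrt (hXpos i).le]
    rw [div_div]
    ring_nf
  simp only [hcorr]
  have hne : var μ Y ≠ 0 := hYpos.ne'
  rw [Finset.sum_neg_distrib, ← Finset.sum_div]
  rw [show var μ Y + 2 * -(∑ i, cov μ Y (X i) ^ 2 / var μ (X i)) +
        ∑ i, cov μ Y (X i) ^ 2 / var μ (X i)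
      = var μ Y - ∑ i, cov μ Y (X i) ^ 2 / var μ (X i) from by ring]
  rw [sub_div, div_self hne]
end

section
/- (Remark 1, equality case) Let Y be a square-integrable real random variable, let X(1), …, X(n) be pairwise independent square-integrable real random variables with Var(X(i)) > 0 for each i, and let λ ≠ 0 be a real number. If αᵢ = −λ Cov(Y, X(i))/Var(X(i)) for all i and V = Σᵢ αᵢ X(i) satisfies Var(V) > 0, then Cov(Y, V)²/Var(V) = Σᵢ Cov(Y, X(i))²/Var(X(i)); i.e., a control variate of the form V = Σᵢ αᵢ X(i) with weights proportional to −Cov(Y, X(i))/Var(X(i)) attains the optimal variance reduction of Theorem 1. -/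
open MeasureTheory ProbabilityTheory

section Aux

variable {Ω : Type*} [MeasurableSpace Ω] {μ : Measure Ω} [IsProbabilityMeasure μ]

omit [IsProbabilityMeasure μ] in
lemma integrable_mul_of_memL2 {f g : Ω → ℝ} (hf : MemLp f 2 μ) (hg : MemLp g 2 μ) :
    Integrable (fun ω => f ω * g ω) μ := by
  have h : MemLp (f • g) 1 μ := hg.smul hf (hpqr := ⟨by simp [ENNReal.inv_two_add_inv_two]⟩)
  exact memLp_one_iff_integrable.mp h

omit [IsProbabilityMeasure μ] in
lemma cov_comm (f g : Ω → ℝ) : cov μ f g = cov μ g f := by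
  unfold cov; simp_rw [mul_comm]

lemma cov_sum_right {m : ℕ} (Y : Ω → ℝ) (Z : Fin m → Ω → ℝ) (β : Fin m → ℝ)
    (hY : MemLp Y 2 μ) (hZ : ∀ i, MemLp (Z i) 2 μ) :
    cov μ Y (fun ω => ∑ i, β i * Z i ω) = ∑ i, β i * cov μ Y (Z i) := by
  have hVint : ∀ i, Integrable (fun ω => β i * Z i ω) μ :=
    fun i => ((hZ i).integrable one_le_two).const_mul _
  have hEV : (∫ ω, ∑ i, β i * Z i ω ∂μ) = ∑ i, β i * ∫ ω', Z i ω' ∂μ := by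
    rw [integral_finset_sum _ (fun i _ => hVint i)]
    simp [integral_const_mul]
  unfold cov
  rw [hEV]
  have key : ∀ ω, (Y ω - ∫ ω', Y ω' ∂μ) * ((∑ i, β i * Z i ω) - ∑ i, β i * ∫ ω', Z i ω' ∂μ)
      = ∑ i, β i * ((Y ω - ∫ ω', Y ω' ∂μ) * (Z i ω - ∫ ω', Z i ω' ∂μ)) := by
    intro ω
    rw [← Finset.sum_sub_distrib, Finset.mul_sum]
    exact Finset.sum_congr rfl fun i _ => by ring
  simp_rw [key]
  rw [integral_finset_sum]
  · exact Finset.sum_congr rfl fun i _ => integral_const_mul _ _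
  · intro i _
    exact (integrable_mul_of_memL2 (hY.sub (memLp_const _))
      ((hZ i).sub (memLp_const _))).const_mul _

lemma cov_eq_zero_of_indepFun {f g : Ω → ℝ} (h : IndepFun f g μ)
    (hf : MemLp f 2 μ) (hg : MemLp g 2 μ) : cov μ f g = 0 := by
  unfold cov
  have hind : IndepFun (fun ω => f ω - ∫ ω', f ω' ∂μ) (fun ω => g ω - ∫ ω', g ω' ∂μ) μ :=
    h.comp (measurable_id.sub_const _) (measurable_id.sub_const _)
  have hprod := hind.integral_fun_mul_eq_mul_integral (hf.sub (memLp_const _)).aestronglyMeasurable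
    (hg.sub (memLp_const _)).aestronglyMeasurable
  have hzero : (∫ ω, (f ω - ∫ ω', f ω' ∂μ) ∂μ) = 0 := by
    rw [integral_sub (hf.integrable one_le_two) (integrable_const _)]
    simp
  calc (∫ ω, (f ω - ∫ ω', f ω' ∂μ) * (g ω - ∫ ω', g ω' ∂μ) ∂μ)
      = (∫ ω, (f ω - ∫ ω', f ω' ∂μ) ∂μ) * (∫ ω, (g ω - ∫ ω', g ω' ∂μ) ∂μ) := hprod
    _ = 0 := by rw [hzero, zero_mul]

end Aux

/-- Remark 1, equality case: weights proportional to `-Cov(Y,Xᵢ)/Var(Xᵢ)`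
attain the optimal variance reduction. -/
theorem optimal_reduction_of_proportional_weights {Ω : Type*} [MeasurableSpace Ω]
    (μ : Measure Ω) [IsProbabilityMeasure μ] {n : ℕ} (Y : Ω → ℝ) (X : Fin n → Ω → ℝ)
    (hY : MemLp Y 2 μ) (hX : ∀ i, MemLp (X i) 2 μ)
    (hindep : Pairwise fun i j => IndepFun (X i) (X j) μ)
    (hXpos : ∀ i, 0 < var μ (X i)) (lam : ℝ) (hlam : lam ≠ 0) (α : Fin n → ℝ)
    (hα : ∀ i, α i = -lam * (cov μ Y (X i) / var μ (X i)))
    (hVpos : 0 < var μ (fun ω => ∑ i, α i * X i ω)) :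
    cov μ Y (fun ω => ∑ i, α i * X i ω) ^ 2 / var μ (fun ω => ∑ i, α i * X i ω) =
      ∑ i, cov μ Y (X i) ^ 2 / var μ (X i) := by
  set S : ℝ := ∑ i, cov μ Y (X i) ^ 2 / var μ (X i) with hS
  have hV : MemLp (fun ω => ∑ i, α i * X i ω) 2 μ := by
    have := memLp_finset_sum' (μ := μ) (p := 2) Finset.univ
      (fun i (_ : i ∈ Finset.univ) => (hX i).const_mul (α i))
    exact this.ae_eq (Filter.Eventually.of_forall fun ω => by simp)
  have hvarXne : ∀ i, var μ (X i) ≠ 0 := fun i => (hXpos i).ne'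
  -- covariance of Y with V
  have hcovYV : cov μ Y (fun ω => ∑ i, α i * X i ω) = -lam * S := by
    rw [cov_sum_right Y X α hY hX, hS, Finset.mul_sum]
    exact Finset.sum_congr rfl fun i _ => by rw [hα i]; field_simp
  -- variance of V
  have hvarV : var μ (fun ω => ∑ i, α i * X i ω) = lam ^ 2 * S := by
    have hcovVX : ∀ j, cov μ (fun ω => ∑ i, α i * X i ω) (X j) = α j * var μ (X j) := by
      intro j
      rw [cov_comm, cov_sum_right (X j) X α (hX j) hX]
      rw [Finset.sum_eq_single j]
      · rw [cov_comm]; rfl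
      · intro i _ hij
        rw [cov_eq_zero_of_indepFun (hindep (Ne.symm hij)) (hX j) (hX i), mul_zero]
      · intro h; exact absurd (Finset.mem_univ j) h
    have : var μ (fun ω => ∑ i, α i * X i ω)
        = ∑ j, α j * (α j * var μ (X j)) := by
      rw [var, cov_sum_right _ X α hV hX]
      exact Finset.sum_congr rfl fun j _ => by rw [hcovVX j]
    rw [this, hS, Finset.mul_sum]
    refine Finset.sum_congr rfl fun j _ => ?_
    rw [hα j]
    field_simp [hvarXne j]
  have hSpos : 0 < S := by
    by_contra h
    push_neg at h
    have : var μ (fun ω => ∑ i, α i * X i ω) ≤ 0 := by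
      rw [hvarV]
      exact mul_nonpos_of_nonneg_of_nonpos (sq_nonneg _) h
    linarith
  rw [hcovYV, hvarV]
  field_simp
end
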